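/- Fix K ≥ 1 and, for each nonzero binary weight vector w ∈ {0,1}^K with w ≠ 0, a threshold γ_w ∈ ℝ. Then the acceptance region of the adaptively weighted (AW) statistic, namely the intersection over all such w of the sets { (z₁, …, z_K) ∈ ℝ^K : −∑_{k=1}^K w_k · log p(z_k) < γ_w }, where p(z) = 2(1 − Φ(|z|)), is a convex subset of ℝ^K. -/

import Mathlib

/-!
Writing `Q = 1 - Φ` for the upper tail, `-log p(z) = h(|z|)` with `h(t) = -log (2 Q(t))`.
Since `h' = φ / Q` is the hazard rate of the normal law, `h` is convex as soon as the hazard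
rate is nondecreasing, and `(φ / Q)' = φ (φ - t Q) / Q²` is nonnegative by the Mills-ratio
inequality `t Q(t) ≤ φ(t)`, which follows from `t ∫_t^∞ φ ≤ ∫_t^∞ s φ(s) ds = φ(t)`.
Being also nondecreasing, `h` stays convex after composition with `|·|`, so each
`z ↦ -∑ w_k log p(z_k)` with `w ≥ 0` is convex and its strict sublevel sets are convex.
-/

/-- The standard normal density φ(t) = (1/√(2π))·exp(−t²/2). -/
noncomputable def stdNormalPDF (t : ℝ) : ℝ :=
  (Real.sqrt (2 * Real.pi))⁻¹ * Real.exp (-t ^ 2 / 2)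

/-- The standard normal cumulative distribution function Φ(t) = ∫_{−∞}^t φ(s) ds. -/
noncomputable def stdNormalCDF (t : ℝ) : ℝ :=
  ∫ s in Set.Iic t, stdNormalPDF s

/-- The two-sided p-value function p(z) = 2(1 − Φ(|z|)). -/
noncomputable def pValue (z : ℝ) : ℝ := 2 * (1 - stdNormalCDF |z|)

open MeasureTheory ProbabilityTheory Real Set Filter Topology

lemma ConvexOn.comp_norm {E : Type*} [SeminormedAddCommGroup E] [NormedSpace ℝ E] {g : ℝ → ℝ}
    (hg : ConvexOn ℝ (Ici 0) g) (hg_mono : MonotoneOn g (Ici 0)) :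
    ConvexOn ℝ univ (fun x : E => g ‖x‖) := by
  refine ⟨convex_univ, fun x _ y _ a b ha hb hab => ?_⟩
  have hnorm := (convexOn_norm (convex_univ (𝕜 := ℝ) (E := E))).2 (mem_univ x) (mem_univ y)
    ha hb hab
  calc g ‖a • x + b • y‖ ≤ g (a • ‖x‖ + b • ‖y‖) :=
        hg_mono (norm_nonneg _) (by simp only [mem_Ici]; positivity) hnorm
    _ ≤ a • g ‖x‖ + b • g ‖y‖ := hg.2 (norm_nonneg x) (norm_nonneg y) ha hb hab

lemma ConvexOn.sum_mul_apply {ι : Type*} [Fintype ι] {g : ℝ → ℝ} (hg : ConvexOn ℝ univ g)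
    {w : ι → ℝ} (hw : 0 ≤ w) : ConvexOn ℝ univ (fun z : ι → ℝ => ∑ k, w k * g (z k)) := by
  refine ⟨convex_univ, fun x _ y _ a b ha hb hab => ?_⟩
  simp only [smul_eq_mul, Pi.add_apply, Pi.smul_apply, Finset.mul_sum, ← Finset.sum_add_distrib]
  refine Finset.sum_le_sum fun k _ => ?_
  calc w k * g (a * x k + b * y k) ≤ w k * (a * g (x k) + b * g (y k)) :=
        mul_le_mul_of_nonneg_left (hg.2 (mem_univ _) (mem_univ _) ha hb hab) (hw k)
    _ = a * (w k * g (x k)) + b * (w k * g (y k)) := by ring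

lemma stdNormalPDF_eq_gaussianPDFReal : stdNormalPDF = gaussianPDFReal 0 1 := by
  ext t
  simp [stdNormalPDF, gaussianPDFReal]

lemma stdNormalPDF_pos (t : ℝ) : 0 < stdNormalPDF t := by
  rw [stdNormalPDF_eq_gaussianPDFReal]
  exact gaussianPDFReal_pos _ _ _ one_ne_zero

lemma integrable_stdNormalPDF : Integrable stdNormalPDF := by
  rw [stdNormalPDF_eq_gaussianPDFReal]
  exact integrable_gaussianPDFReal _ _

lemma integral_stdNormalPDF : ∫ t, stdNormalPDF t = 1 := by
  rw [stdNormalPDF_eq_gaussianPDFReal]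
  exact integral_gaussianPDFReal_eq_one _ one_ne_zero

lemma continuous_stdNormalPDF : Continuous stdNormalPDF := by
  unfold stdNormalPDF
  fun_prop

lemma hasDerivAt_stdNormalPDF (t : ℝ) : HasDerivAt stdNormalPDF (-t * stdNormalPDF t) t := by
  have h : HasDerivAt (fun s : ℝ => -s ^ 2 / 2) (-t) t :=
    (((hasDerivAt_pow 2 t).neg).div_const 2).congr_deriv (by norm_num; ring)
  exact (h.exp.const_mul _).congr_deriv (by unfold stdNormalPDF; ring)

lemma tendsto_stdNormalPDF_atTop : Tendsto stdNormalPDF atTop (𝓝 0) := by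
  have h : Tendsto (fun t : ℝ => -t ^ 2 / 2) atTop atBot :=
    (tendsto_neg_atBot_iff.mpr (tendsto_pow_atTop two_ne_zero)).atBot_div_const two_pos
  have := (tendsto_exp_atBot.comp h).const_mul (√(2 * π))⁻¹
  rwa [mul_zero] at this

lemma hasDerivAt_stdNormalCDF (t : ℝ) : HasDerivAt stdNormalCDF (stdNormalPDF t) t := by
  have hFTC : HasDerivAt (fun u => ∫ s in (0 : ℝ)..u, stdNormalPDF s) (stdNormalPDF t) t :=
    intervalIntegral.integral_hasDerivAt_right integrable_stdNormalPDF.intervalIntegrable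
      (continuous_stdNormalPDF.stronglyMeasurableAtFilter _ _) continuous_stdNormalPDF.continuousAt
  refine (hFTC.const_add (stdNormalCDF 0)).congr_of_eventuallyEq (Eventually.of_forall fun u => ?_)
  have := intervalIntegral.integral_Iic_sub_Iic (μ := volume) (a := 0) (b := u)
    integrable_stdNormalPDF.integrableOn integrable_stdNormalPDF.integrableOn
  simp only [stdNormalCDF] at this ⊢
  linarith

noncomputable def stdNormalTail (t : ℝ) : ℝ := 1 - stdNormalCDF t

lemma stdNormalTail_eq_integral (t : ℝ) : stdNormalTail t = ∫ s in Ioi t, stdNormalPDF s := by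
  have := intervalIntegral.integral_Iic_add_Ioi (μ := volume) (b := t)
    integrable_stdNormalPDF.integrableOn integrable_stdNormalPDF.integrableOn
  rw [stdNormalTail, stdNormalCDF, ← integral_stdNormalPDF, ← this]
  ring

lemma stdNormalTail_pos (t : ℝ) : 0 < stdNormalTail t := by
  rw [stdNormalTail_eq_integral, setIntegral_pos_iff_support_of_nonneg_ae
    (ae_of_all _ fun s => (stdNormalPDF_pos s).le) integrable_stdNormalPDF.integrableOn,
    Function.support_eq_univ fun s => (stdNormalPDF_pos s).ne', univ_inter]
  simp

lemma hasDerivAt_stdNormalTail (t : ℝ) : HasDerivAt stdNormalTail (-stdNormalPDF t) t :=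
  (hasDerivAt_stdNormalCDF t).const_sub 1

lemma integrable_mul_stdNormalPDF : Integrable (fun s => s * stdNormalPDF s) := by
  refine ((integrable_mul_exp_neg_mul_sq (by norm_num : (0 : ℝ) < 1 / 2)).const_mul
    (√(2 * π))⁻¹).congr (Eventually.of_forall fun s => ?_)
  simp only [stdNormalPDF, show -s ^ 2 / 2 = -(1 / 2) * s ^ 2 by ring]
  ring

lemma integral_Ioi_mul_stdNormalPDF (t : ℝ) :
    ∫ s in Ioi t, s * stdNormalPDF s = stdNormalPDF t := by
  have hlim : Tendsto (fun s => -stdNormalPDF s) atTop (𝓝 0) := by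
    simpa only [neg_zero] using tendsto_stdNormalPDF_atTop.neg
  have := integral_Ioi_of_hasDerivAt_of_tendsto' (a := t)
    (fun s _ => (hasDerivAt_stdNormalPDF s).neg.congr_deriv (by ring))
    integrable_mul_stdNormalPDF.integrableOn hlim
  simpa using this

lemma mul_stdNormalTail_le_stdNormalPDF (t : ℝ) : t * stdNormalTail t ≤ stdNormalPDF t := by
  rw [stdNormalTail_eq_integral, ← integral_Ioi_mul_stdNormalPDF t, ← integral_const_mul]
  exact setIntegral_mono_on (integrable_stdNormalPDF.integrableOn.const_mul t)
    integrable_mul_stdNormalPDF.integrableOn measurableSet_Ioi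
    fun s hs => mul_le_mul_of_nonneg_right (le_of_lt hs) (stdNormalPDF_pos s).le

lemma monotone_stdNormalPDF_div_stdNormalTail :
    Monotone (fun t => stdNormalPDF t / stdNormalTail t) := by
  have hderiv (t : ℝ) : HasDerivAt (fun u => stdNormalPDF u / stdNormalTail u)
      (stdNormalPDF t * (stdNormalPDF t - t * stdNormalTail t) / stdNormalTail t ^ 2) t :=
    ((hasDerivAt_stdNormalPDF t).div (hasDerivAt_stdNormalTail t)
      (stdNormalTail_pos t).ne').congr_deriv (by ring)
  refine monotone_of_deriv_nonneg (fun t => (hderiv t).differentiableAt) fun t => ?_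
  rw [(hderiv t).deriv]
  exact div_nonneg (mul_nonneg (stdNormalPDF_pos t).le
    (sub_nonneg.2 (mul_stdNormalTail_le_stdNormalPDF t))) (sq_nonneg _)

lemma hasDerivAt_neg_log_two_mul_stdNormalTail (t : ℝ) :
    HasDerivAt (fun u => -log (2 * stdNormalTail u)) (stdNormalPDF t / stdNormalTail t) t :=
  ((((hasDerivAt_stdNormalTail t).const_mul 2).log
    (by linarith [stdNormalTail_pos t])).neg).congr_deriv (by field_simp)

lemma convexOn_neg_log_two_mul_stdNormalTail :
    ConvexOn ℝ univ (fun t => -log (2 * stdNormalTail t)) := by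
  refine Monotone.convexOn_univ_of_deriv
    (fun t => (hasDerivAt_neg_log_two_mul_stdNormalTail t).differentiableAt) ?_
  rw [funext fun t => (hasDerivAt_neg_log_two_mul_stdNormalTail t).deriv]
  exact monotone_stdNormalPDF_div_stdNormalTail

lemma monotone_neg_log_two_mul_stdNormalTail :
    Monotone (fun t => -log (2 * stdNormalTail t)) := by
  refine monotone_of_deriv_nonneg
    (fun t => (hasDerivAt_neg_log_two_mul_stdNormalTail t).differentiableAt) fun t => ?_
  rw [(hasDerivAt_neg_log_two_mul_stdNormalTail t).deriv]
  exact div_nonneg (stdNormalPDF_pos t).le (stdNormalTail_pos t).le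

-- `pValue z` unfolds to `2 * stdNormalTail |z|`, and `‖z‖` to `|z|`.
lemma convexOn_neg_log_pValue : ConvexOn ℝ univ (fun z => -log (pValue z)) :=
  ConvexOn.comp_norm (E := ℝ)
    (convexOn_neg_log_two_mul_stdNormalTail.subset (subset_univ _) (convex_Ici 0))
    (monotone_neg_log_two_mul_stdNormalTail.monotoneOn _)

theorem stmt_5_general (K : ℕ) (γ : (Fin K → ℝ) → ℝ) :
    Convex ℝ
      (⋂ w ∈ {w : Fin K → ℝ | (∀ k, w k = 0 ∨ w k = 1) ∧ w ≠ 0},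
        {z : Fin K → ℝ | -∑ k, w k * Real.log (pValue (z k)) < γ w}) := by
  refine convex_iInter₂ fun w hw => ?_
  have hw_nonneg : 0 ≤ w := fun k => (hw.1 k).elim (·.ge) (·.symm ▸ zero_le_one)
  have := (convexOn_neg_log_pValue.sum_mul_apply hw_nonneg).convex_lt (γ w)
  simpa only [mem_univ, true_and, mul_neg, Finset.sum_neg_distrib] using this

/-- For K ≥ 1 and, for each nonzero binary weight vector w ∈ {0,1}^K, a threshold γ_w ∈ ℝ,
the acceptance region of the adaptively weighted (AW) statistic, namely the intersection
over all such w of { z ∈ ℝ^K : −∑_k w_k · log p(z_k) < γ_w }, is a convex subset of ℝ^K. -/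
theorem stmt_5 (K : ℕ) (hK : 1 ≤ K) (γ : (Fin K → ℝ) → ℝ) :
    Convex ℝ
      (⋂ w ∈ {w : Fin K → ℝ | (∀ k, w k = 0 ∨ w k = 1) ∧ w ≠ 0},
        {z : Fin K → ℝ | -∑ k, w k * Real.log (pValue (z k)) < γ w}) :=
  stmt_5_general K γ
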